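/- (Stability Lemma) Let s ∈ (0,1) be irrational and let p ∈ Xₛ be a periodic point of fₛ of period n (all iterates of fₛ are defined on p and fₛⁿ(p) = p). For i = 0,…,n−1 put p_i = fₛⁱ(p), and let V_i ∈ L₂(s) and W_i ∈ L₁(s) be the unique lattice vectors with f′ₛ(p_i) = p_i + V_i and f′ₛ(p_i + V_i) = p_i + V_i + W_i = p_{i+1}. Then Σ_{i=0}^{n−1} V_i = 0 and Σ_{i=0}^{n−1} W_i = 0; in particular the arithmetic graph of p is a closed polygon. -/

import Mathlib

open Set

noncomputable section OctaPET

/-- Rotation by `π/2` about the origin in `ℝ²`. -/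
def Jrot (p : ℝ × ℝ) : ℝ × ℝ := (-p.2, p.1)

/-- The closed parallelogram `F₁(s)` centered at the origin, spanned by `(2,0)` and `(2s,2s)`. -/
def F1 (s : ℝ) : Set (ℝ × ℝ) :=
  {p | ∃ a b : ℝ, a ∈ Icc (-(1/2) : ℝ) (1/2) ∧ b ∈ Icc (-(1/2) : ℝ) (1/2) ∧
    p = a • ((2 : ℝ), (0 : ℝ)) + b • ((2*s : ℝ), (2*s : ℝ))}

/-- `F₂(s) = J(F₁(s))`. -/
def F2 (s : ℝ) : Set (ℝ × ℝ) := Jrot '' F1 s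

/-- The lattice `L₁(s)`, generated by `(2,0)` and `(2s,−2s)`. -/
def L1 (s : ℝ) : AddSubgroup (ℝ × ℝ) :=
  AddSubgroup.closure {((2 : ℝ), (0 : ℝ)), ((2*s : ℝ), (-(2*s) : ℝ))}

/-- The lattice `L₂(s)`, generated by `(0,2)` and `(2s,2s)`. -/
def L2 (s : ℝ) : AddSubgroup (ℝ × ℝ) :=
  AddSubgroup.closure {((0 : ℝ), (2 : ℝ)), ((2*s : ℝ), (2*s : ℝ))}

/-- The partial map `f′ₛ` as a relation: `step s p q` holds iff `f′ₛ` is defined at `p`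
with value `q`.  For `p ∈ F_j(s)`, `f′ₛ(p) = p + V` where `V` is the *unique* vector of
`L_{3−j}(s)` with `p + V ∈ F_{3−j}(s)`. -/
def step (s : ℝ) (p q : ℝ × ℝ) : Prop :=
  (p ∈ F1 s ∧ (∃! V, V ∈ L2 s ∧ p + V ∈ F2 s) ∧ q - p ∈ L2 s ∧ q ∈ F2 s) ∨
  (p ∈ F2 s ∧ (∃! V, V ∈ L1 s ∧ p + V ∈ F1 s) ∧ q - p ∈ L1 s ∧ q ∈ F1 s)

/-- The map `fₛ = (f′ₛ)²`, as a relation: `fRel s p q` holds iff `fₛ` is defined at `p`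
with value `q`. -/
def fRel (s : ℝ) (p q : ℝ × ℝ) : Prop := ∃ r, step s p r ∧ step s r q

end OctaPET

/-! The sums `Σ V_i ∈ L₂(s)` and `Σ W_i ∈ L₁(s)` cancel because the orbit closes up, and for
irrational `s` the lattices `L₁(s)` and `L₂(s)` meet only in `0`. -/

theorem Irrational.eq_zero_of_intCast_add_intCast_mul_eq_zero {x : ℝ} (hx : Irrational x)
    {m k : ℤ} (h : (m : ℝ) + k * x = 0) : m = 0 ∧ k = 0 := by
  obtain rfl | hk := eq_or_ne k 0
  · exact ⟨by exact_mod_cast (by simpa using h : (m : ℝ) = 0), rfl⟩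
  · exact absurd (eq_neg_of_add_eq_zero_right h)
      (by exact_mod_cast (hx.intCast_mul hk).ne_int (-m))

theorem disjoint_L1_L2 {s : ℝ} (hs : Irrational s) : Disjoint (L1 s) (L2 s) := by
  rw [AddSubgroup.disjoint_def]
  intro x hx1 hx2
  obtain ⟨m, k, rfl⟩ := AddSubgroup.mem_closure_pair.mp hx1
  obtain ⟨a, b, hab⟩ := AddSubgroup.mem_closure_pair.mp hx2
  have hfst : (b * (2 * s) : ℝ) = m * 2 + k * (2 * s) := by
    simpa using congrArg Prod.fst hab
  have hsnd : (a * 2 + b * (2 * s) : ℝ) = -(k * (2 * s)) := by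
    simpa using congrArg Prod.snd hab
  obtain ⟨rfl, hkb⟩ := hs.eq_zero_of_intCast_add_intCast_mul_eq_zero (m := m) (k := k - b)
    (by push_cast; linarith)
  obtain rfl : k = b := sub_eq_zero.mp hkb
  obtain ⟨-, h2k⟩ := hs.eq_zero_of_intCast_add_intCast_mul_eq_zero (m := a) (k := 2 * k)
    (by push_cast; linarith)
  obtain rfl : k = 0 := by omega
  simp

theorem stability_lemma (s : ℝ) (hirr : Irrational s)
    (p : ℝ × ℝ) (n : ℕ)
    (u v w : ℕ → ℝ × ℝ)
    (hu0 : u 0 = p) (hun : u n = p)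
    (hv : ∀ i < n, v i ∈ L2 s) (hw : ∀ i < n, w i ∈ L1 s)
    (hnext : ∀ i < n, u (i + 1) = u i + v i + w i) :
    ∑ i ∈ Finset.range n, v i = 0 ∧ ∑ i ∈ Finset.range n, w i = 0 := by
  have hclosed : ∑ i ∈ Finset.range n, v i + ∑ i ∈ Finset.range n, w i = 0 := by
    have htel := Finset.sum_range_sub u n
    rw [hun, hu0, sub_self] at htel
    rw [← Finset.sum_add_distrib, ← htel]
    refine Finset.sum_congr rfl fun i hi => ?_
    rw [hnext i (Finset.mem_range.mp hi)]
    abel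
  have hV : ∑ i ∈ Finset.range n, v i ∈ L2 s :=
    AddSubgroup.sum_mem _ fun i hi => hv i (Finset.mem_range.mp hi)
  have hW : -∑ i ∈ Finset.range n, w i ∈ L1 s :=
    neg_mem <| AddSubgroup.sum_mem _ fun i hi => hw i (Finset.mem_range.mp hi)
  have hW0 : ∑ i ∈ Finset.range n, w i = 0 := neg_eq_zero.mp <|
    AddSubgroup.disjoint_def'.mp (disjoint_L1_L2 hirr) hW hV (neg_eq_of_add_eq_zero_left hclosed)
  exact ⟨by simpa [hW0] using hclosed, hW0⟩
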